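/- arXiv:1806.10243 — 6 statements merged into one kernel-verified Lean document; each statement's English description precedes it below -/
import Mathlib

section
/- Let n < m be positive integers and let α₁,…,αₙ, β_{n+1},…,β_m be positive integers with α₁+⋯+αₙ = β_{n+1}+⋯+β_m. Then the ratio u_k(α,β) = (α₁k)!⋯(αₙk)!/((β_{n+1}k)!⋯(β_m k)!) is an integer for every natural number k if and only if the dilated polytope nΔ(α,β) contains no interior lattice points. -/
/-!
Landau's criterion: `u_k` is an integer for every `k` iff the step function
`F(s) = ∑ ⌊αᵢ s⌋ - ∑ ⌊βⱼ s⌋` is nonnegative. By Legendre's formula `v_p(u_k) = ∑_e F(k / p^e)`,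
which gives one direction; conversely `F` is `1`-periodic and right-locally constant, so a negative
value is attained at some `k / p` with `p` a large prime, and then `v_p(u_k) = F(k / p) < 0`.

Since `∑ bᵢ = 0`, the polytope `Δ(α, β)` is `{y | ∃ t ≥ 0, y ≥ t b, t + ∑ yᵢ ≤ 1}`, with interior
given by the strict inequalities and `t > 0`. An interior lattice point `x` of `nΔ` with parameter
`t` forces `F(t) ≤ ∑ xᵢ - n < 0`; conversely, if `F(s) < 0` with `0 ≤ s < 1`, the point
`x = (⌊αᵢ s⌋ + 1, -⌊βⱼ s⌋)` with parameter slightly larger than `s` is such a lattice point.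
-/

open Finset Filter Topology Pointwise
open scoped Nat

namespace Landau

variable {ι κ : Type*} [Fintype ι] [Fintype κ]

lemma factorization_prod_factorial {p : ℕ} (hp : p.Prime) (c : ι → ℕ) {b : ℕ} (hb₀ : b ≠ 0)
    (hb : ∀ i, c i < p ^ b) :
    (∏ i, (c i)!).factorization p = ∑ e ∈ Ico 1 b, ∑ i, c i / p ^ e := by
  rw [Nat.factorization_prod fun i _ => (c i).factorial_ne_zero, Finset.sum_apply', sum_comm]
  exact sum_congr rfl fun i _ => Nat.factorization_factorial hp (Nat.log_lt_of_lt_pow' hb₀ (hb i))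

lemma eventually_mul_lt_floor_add_one (a s : ℝ) : ∀ᶠ t in 𝓝 s, a * t < ⌊a * s⌋ + 1 :=
  (continuous_const.mul continuous_id).continuousAt.eventually_lt continuousAt_const
    (Int.lt_floor_add_one _)

lemma eventually_floor_mul_eq {a : ℝ} (ha : 0 ≤ a) (s : ℝ) :
    ∀ᶠ t in 𝓝[≥] s, ⌊a * t⌋ = ⌊a * s⌋ := by
  filter_upwards [nhdsWithin_le_nhds (eventually_mul_lt_floor_add_one a s), self_mem_nhdsWithin]
    with t hlt hst
  exact Int.floor_eq_iff.2 ⟨(Int.floor_le _).trans (mul_le_mul_of_nonneg_left hst ha), hlt⟩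

section StepFun

variable (α : ι → ℕ) (β : κ → ℕ)

noncomputable def stepFun (s : ℝ) : ℤ := ∑ i, ⌊(α i : ℝ) * s⌋ - ∑ j, ⌊(β j : ℝ) * s⌋

lemma stepFun_natCast_div (k d : ℕ) :
    stepFun α β (k / d) = ((∑ i, α i * k / d : ℕ) : ℤ) - ((∑ j, β j * k / d : ℕ) : ℤ) := by
  have floor_eq (a : ℕ) : ⌊(a : ℝ) * (k / d)⌋ = ((a * k / d : ℕ) : ℤ) := by
    rw [← mul_div_assoc, ← Nat.cast_mul, ← Int.natCast_floor_eq_floor (by positivity),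
      Nat.floor_div_eq_div]
  simp only [stepFun, floor_eq, Nat.cast_sum]

lemma stepFun_fract (hsum : ∑ i, α i = ∑ j, β j) (s : ℝ) :
    stepFun α β (Int.fract s) = stepFun α β s := by
  have floor_eq (a : ℕ) : ⌊(a : ℝ) * Int.fract s⌋ = ⌊(a : ℝ) * s⌋ - a * ⌊s⌋ := by
    rw [Int.fract, mul_sub, ← Int.floor_sub_intCast]
    push_cast
    rfl
  have hsum' : ∑ i, (α i : ℤ) = ∑ j, (β j : ℤ) := by exact_mod_cast hsum
  simp only [stepFun, floor_eq, sum_sub_distrib, ← sum_mul, hsum']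
  ring

lemma eventually_stepFun_eq (s : ℝ) : ∀ᶠ t in 𝓝[≥] s, stepFun α β t = stepFun α β s := by
  filter_upwards [eventually_all.2 fun i => eventually_floor_mul_eq (α i).cast_nonneg s,
    eventually_all.2 fun j => eventually_floor_mul_eq (β j).cast_nonneg s] with t hα hβ
  simp only [stepFun, hα, hβ]

theorem prod_factorial_dvd_of_stepFun_nonneg (h : ∀ s, 0 ≤ stepFun α β s) (k : ℕ) :
    ∏ j, (β j * k)! ∣ ∏ i, (α i * k)! := by
  rw [← Nat.factorization_le_iff_dvd (by positivity) (by positivity)]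
  intro p
  by_cases hp : p.Prime
  · set N := ∑ i, α i * k + ∑ j, β j * k
    have hN : N < p ^ (N + 1) :=
      (Nat.lt_pow_self hp.one_lt).trans (Nat.pow_lt_pow_right hp.one_lt N.lt_succ_self)
    have hα i : α i * k < p ^ (N + 1) :=
      ((single_le_sum (fun i _ => Nat.zero_le _) (mem_univ i)).trans
        (Nat.le_add_right _ _)).trans_lt hN
    have hβ j : β j * k < p ^ (N + 1) :=
      ((single_le_sum (fun j _ => Nat.zero_le _) (mem_univ j)).trans
        (Nat.le_add_left _ _)).trans_lt hN
    rw [factorization_prod_factorial hp _ N.succ_ne_zero hα,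
      factorization_prod_factorial hp _ N.succ_ne_zero hβ]
    refine sum_le_sum fun e _ => ?_
    have := h (k / (p ^ e : ℕ))
    rw [stepFun_natCast_div] at this
    omega
  · simp [Nat.factorization_eq_zero_of_not_prime _ hp]

lemma stepFun_div_prime_nonneg {p k : ℕ} (hp : p.Prime) (hα : ∀ i, α i * k < p ^ 2)
    (hβ : ∀ j, β j * k < p ^ 2) (h : ∏ j, (β j * k)! ∣ ∏ i, (α i * k)!) :
    0 ≤ stepFun α β (k / p) := by
  have := (Nat.factorization_le_iff_dvd (by positivity) (by positivity)).2 h p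
  rw [factorization_prod_factorial hp _ two_ne_zero hα,
    factorization_prod_factorial hp _ two_ne_zero hβ] at this
  rw [stepFun_natCast_div]
  simp only [Nat.Ico_succ_singleton, sum_singleton, pow_one] at this
  omega

theorem stepFun_nonneg_of_prod_factorial_dvd (hsum : ∑ i, α i = ∑ j, β j)
    (h : ∀ k : ℕ, ∏ j, (β j * k)! ∣ ∏ i, (α i * k)!) (s : ℝ) : 0 ≤ stepFun α β s := by
  rw [← stepFun_fract α β hsum]
  set s₀ := Int.fract s
  obtain ⟨u, hu, hconst⟩ := mem_nhdsGE_iff_exists_Ico_subset.1 (eventually_stepFun_eq α β s₀)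
  obtain ⟨N, hN⟩ := exists_nat_gt (1 / (u - s₀))
  obtain ⟨p, hp_ge, hp⟩ := Nat.exists_infinite_primes (N + ∑ i, α i + 1)
  have hp₀ : (0 : ℝ) < p := by exact_mod_cast hp.pos
  have hpu : 1 / (u - s₀) < p := hN.trans_le (by exact_mod_cast (by omega : N ≤ p))
  set k := ⌈p * s₀⌉₊
  have hk : k ≤ p := Nat.ceil_le.2 (mul_le_of_le_one_right hp₀.le (Int.fract_lt_one s).le)
  have hkp : (k : ℝ) / p ∈ Set.Ico s₀ u := by
    rw [Set.mem_Ico, le_div_iff₀ hp₀, div_lt_iff₀ hp₀]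
    rw [div_lt_iff₀ (sub_pos.2 (Set.mem_Ioi.1 hu))] at hpu
    constructor
    · rw [mul_comm]; exact Nat.le_ceil _
    · nlinarith [Nat.ceil_lt_add_one (mul_nonneg hp₀.le (Int.fract_nonneg s))]
  have hlt {c : ℕ} (hc : c ≤ ∑ i, α i) : c * k < p ^ 2 := by
    rw [sq]; exact Nat.mul_lt_mul_of_lt_of_le (by omega) hk hp.pos
  rw [← hconst hkp]
  exact stepFun_div_prime_nonneg α β hp
    (fun i => hlt (single_le_sum (fun i _ => Nat.zero_le _) (mem_univ i)))
    (fun j => hlt (hsum ▸ single_le_sum (fun j _ => Nat.zero_le _) (mem_univ j))) (h k)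

theorem prod_factorial_dvd_iff (hsum : ∑ i, α i = ∑ j, β j) :
    (∀ k : ℕ, ∏ j, (β j * k)! ∣ ∏ i, (α i * k)!) ↔ ∀ s, 0 ≤ stepFun α β s :=
  ⟨stepFun_nonneg_of_prod_factorial_dvd α β hsum, prod_factorial_dvd_of_stepFun_nonneg α β⟩

end StepFun

section Polytope

variable (b : ι → ℝ)

def polytope (r : ℝ) : Set (ι → ℝ) :=
  {y | ∃ t, 0 ≤ t ∧ (∀ i, t * b i ≤ y i) ∧ t + ∑ i, y i ≤ r}

def openPolytope (r : ℝ) : Set (ι → ℝ) :=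
  {y | ∃ t, 0 < t ∧ (∀ i, t * b i < y i) ∧ t + ∑ i, y i < r}

variable {b}

lemma convex_polytope (r : ℝ) : Convex ℝ (polytope b r) := by
  rintro y ⟨t, ht, hty, hs⟩ z ⟨u, hu, huz, hs'⟩ a c ha hc hac
  have hr : r = a * r + c * r := by rw [← add_mul, hac, one_mul]
  refine ⟨a * t + c * u, by positivity, fun i => ?_, ?_⟩
  · simp only [Pi.add_apply, Pi.smul_apply, smul_eq_mul]
    nlinarith [mul_le_mul_of_nonneg_left (hty i) ha, mul_le_mul_of_nonneg_left (huz i) hc]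
  · simp only [Pi.add_apply, Pi.smul_apply, smul_eq_mul, sum_add_distrib, ← mul_sum]
    nlinarith [mul_le_mul_of_nonneg_left hs ha, mul_le_mul_of_nonneg_left hs' hc]

lemma add_mem_openPolytope {r : ℝ} {y z : ι → ℝ} (hy : y ∈ polytope b r)
    (hz : z ∈ openPolytope b r) {a c : ℝ} (ha : 0 ≤ a) (hc : 0 < c) (hac : a + c = 1) :
    a • y + c • z ∈ openPolytope b r := by
  obtain ⟨t, ht, hty, hs⟩ := hy
  obtain ⟨u, hu, huz, hs'⟩ := hz
  have hr : r = a * r + c * r := by rw [← add_mul, hac, one_mul]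
  refine ⟨a * t + c * u, by positivity, fun i => ?_, ?_⟩
  · simp only [Pi.add_apply, Pi.smul_apply, smul_eq_mul]
    nlinarith [mul_le_mul_of_nonneg_left (hty i) ha, mul_lt_mul_of_pos_left (huz i) hc]
  · simp only [Pi.add_apply, Pi.smul_apply, smul_eq_mul, sum_add_distrib, ← mul_sum]
    nlinarith [mul_le_mul_of_nonneg_left hs ha, mul_lt_mul_of_pos_left hs' hc]

lemma isOpen_openPolytope (r : ℝ) : IsOpen (openPolytope b r) := by
  have : openPolytope b r =
      ⋃ t, {_y | 0 < t} ∩ ((⋂ i, {y | t * b i < y i}) ∩ {y | t + ∑ i, y i < r}) := by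
    ext y; simp [openPolytope]
  rw [this]
  exact isOpen_iUnion fun t => isOpen_const.inter
    ((isOpen_iInter_of_finite fun i => isOpen_lt continuous_const (continuous_apply i)).inter
      (isOpen_lt (by fun_prop) continuous_const))

lemma openPolytope_subset_polytope (r : ℝ) : openPolytope b r ⊆ polytope b r :=
  fun _ ⟨t, ht, hty, hs⟩ => ⟨t, ht.le, fun i => (hty i).le, hs.le⟩

lemma smul_openPolytope {r : ℝ} (hr : 0 < r) : r • openPolytope b 1 = openPolytope b r := by
  ext y
  rw [Set.mem_smul_set_iff_inv_smul_mem₀ hr.ne']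
  simp only [openPolytope, Set.mem_ofPred_eq, Pi.smul_apply, smul_eq_mul, ← mul_sum]
  constructor
  · rintro ⟨t, ht, hty, hs⟩
    refine ⟨r * t, by positivity, fun i => ?_, ?_⟩
    · rw [mul_assoc]; exact (lt_inv_mul_iff₀ hr).1 (hty i)
    · have := mul_lt_mul_of_pos_left hs hr
      rwa [mul_add, mul_inv_cancel_left₀ hr.ne', mul_one] at this
  · rintro ⟨t, ht, hty, hs⟩
    refine ⟨r⁻¹ * t, by positivity, fun i => ?_, ?_⟩
    · rw [mul_assoc]; exact mul_lt_mul_of_pos_left (hty i) (inv_pos.2 hr)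
    · rw [← mul_add, inv_mul_lt_iff₀ hr, mul_one]; exact hs

lemma comp_mem_openPolytope_iff (e : κ ≃ ι) {r : ℝ} {y : ι → ℝ} :
    y ∘ e ∈ openPolytope (b ∘ e) r ↔ y ∈ openPolytope b r := by
  simp only [openPolytope, Set.mem_ofPred_eq, Function.comp_apply, e.forall_congr_left,
    e.sum_comp, Equiv.apply_symm_apply]

variable (hb : ∑ i, b i = 0)
include hb

lemma nonempty_openPolytope : (openPolytope b 1).Nonempty := by
  refine ⟨fun i => (b i + 1) / (Fintype.card ι + 2), 1 / (Fintype.card ι + 2), by positivity,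
    fun i => ?_, ?_⟩
  · rw [one_div_mul_eq_div]; exact div_lt_div_of_pos_right (by linarith) (by positivity)
  · rw [← sum_div, sum_add_distrib, hb, ← add_div, div_lt_one (by positivity)]
    simp only [sum_const, card_univ, nsmul_eq_mul, mul_one]
    linarith

variable [DecidableEq ι]

lemma polytope_subset_convexHull :
    polytope b 1 ⊆ convexHull ℝ ({0} ∪ Set.range (fun i => Pi.single i 1) ∪ {b}) := by
  rintro y ⟨t, ht, hty, hs⟩
  let w : Option (Option ι) → ℝ :=
    fun o => o.elim (1 - t - ∑ i, y i) fun o => o.elim t fun i => y i - t * b i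
  let z : Option (Option ι) → ι → ℝ := fun o => o.elim 0 fun o => o.elim b fun i => Pi.single i 1
  have hy : ∑ o, w o • z o = y := by
    ext j
    simp [w, z, Fintype.sum_option, Finset.sum_apply, Pi.single_apply]
  rw [← hy]
  refine (convex_convexHull ℝ _).sum_mem (fun o _ => ?_) ?_ (fun o _ => subset_convexHull ℝ _ ?_)
  · rcases o with _ | _ | i
    · simp only [w, Option.elim]; linarith
    · exact ht
    · exact sub_nonneg.2 (hty i)
  · simp only [w, Fintype.sum_option, Option.elim, sum_sub_distrib, ← mul_sum, hb]
    ring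
  · rcases o with _ | _ | i <;> simp [z]

lemma convexHull_eq_polytope :
    convexHull ℝ ({0} ∪ Set.range (fun i => Pi.single i 1) ∪ {b}) = polytope b 1 := by
  refine (convexHull_min ?_ (convex_polytope 1)).antisymm (polytope_subset_convexHull hb)
  rintro y ((rfl | ⟨i, rfl⟩) | rfl)
  · exact ⟨0, le_rfl, by simp, by simp⟩
  · refine ⟨0, le_rfl, fun j => ?_, by simp⟩
    simp only [zero_mul, Pi.single_apply]; split_ifs <;> norm_num
  · exact ⟨1, zero_le_one, by simp, by simp [hb]⟩

lemma interior_convexHull_eq_openPolytope :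
    interior (convexHull ℝ ({0} ∪ Set.range (fun i => Pi.single i 1) ∪ {b})) =
      openPolytope b 1 := by
  rw [convexHull_eq_polytope hb]
  refine subset_antisymm (fun y hy => ?_)
    (interior_maximal (openPolytope_subset_polytope 1) (isOpen_openPolytope 1))
  obtain ⟨z, hz⟩ := nonempty_openPolytope hb
  have hcont : Tendsto (fun δ : ℝ => y + δ • (y - z)) (𝓝 0) (𝓝 y) := by
    simpa using (by fun_prop : Continuous fun δ : ℝ => y + δ • (y - z)).tendsto 0
  obtain ⟨δ, hδy, hδ⟩ := (((hcont.eventually (mem_interior_iff_mem_nhds.1 hy)).filter_mono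
    nhdsWithin_le_nhds).and (self_mem_nhdsWithin (s := Set.Ioi 0))).exists
  have hδ : 0 < δ := hδ
  -- `y` lies on the open segment from `y + δ (y - z) ∈ Δ` to `z ∈ interior Δ`
  have hy_eq : y = (1 / (1 + δ)) • (y + δ • (y - z)) + (δ / (1 + δ)) • z := by
    have : 1 + δ ≠ 0 := by positivity
    ext i; simp only [Pi.add_apply, Pi.smul_apply, Pi.sub_apply, smul_eq_mul]; field_simp; ring
  rw [hy_eq]
  exact add_mem_openPolytope hδy hz (by positivity) (by positivity) (by field_simp)

end Polytope

section Lattice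

variable (α : ι → ℕ) (β : κ → ℕ)

def landauVector : ι ⊕ κ → ℝ := Sum.elim (fun i => (α i : ℝ)) fun j => -(β j : ℝ)

lemma sum_landauVector (hsum : ∑ i, α i = ∑ j, β j) : ∑ i, landauVector α β i = 0 := by
  simp [landauVector, Fintype.sum_sum_type, ← Nat.cast_sum, hsum]

lemma stepFun_neg_of_intCast_mem_openPolytope {x : ι ⊕ κ → ℤ}
    (hx : (fun i => (x i : ℝ)) ∈ openPolytope (landauVector α β) (Fintype.card ι)) :
    ∃ s, stepFun α β s < 0 := by
  obtain ⟨t, ht, hxt, hsum⟩ := hx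
  refine ⟨t, ?_⟩
  have hα : ∑ i, (⌊(α i : ℝ) * t⌋ + 1) ≤ ∑ i, x (.inl i) := sum_le_sum fun i _ =>
    Int.add_one_le_of_lt (Int.floor_lt.2 (by rw [mul_comm]; exact hxt (.inl i)))
  have hβ : ∑ j, -x (.inr j) ≤ ∑ j, ⌊(β j : ℝ) * t⌋ := sum_le_sum fun j _ => by
    have := hxt (.inr j)
    simp only [landauVector, Sum.elim_inr] at this
    exact Int.le_floor.2 (by push_cast; linarith)
  have hx : ∑ i, x i < Fintype.card ι := by
    exact_mod_cast (by push_cast; linarith : ((∑ i, x i : ℤ) : ℝ) < Fintype.card ι)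
  simp only [sum_add_distrib, sum_neg_distrib, sum_const, card_univ, nsmul_eq_mul, mul_one]
    at hα hβ
  rw [Fintype.sum_sum_type] at hx
  unfold stepFun
  omega

lemma exists_intCast_mem_openPolytope_of_stepFun_neg (hβ : ∀ j, 0 < β j)
    (hsum : ∑ i, α i = ∑ j, β j) {s : ℝ} (hs : stepFun α β s < 0) :
    ∃ x : ι ⊕ κ → ℤ, (fun i => (x i : ℝ)) ∈ openPolytope (landauVector α β) (Fintype.card ι) := by
  rw [← stepFun_fract α β hsum] at hs
  set s₀ := Int.fract s
  obtain ⟨t, ⟨ht₁, htα⟩, ht₀⟩ := (((eventually_lt_nhds (Int.fract_lt_one s)).and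
    (eventually_all.2 fun i => eventually_mul_lt_floor_add_one (α i) s₀)).filter_mono
    nhdsWithin_le_nhds |>.and (self_mem_nhdsWithin (s := Set.Ioi s₀))).exists
  have ht₀ : s₀ < t := ht₀
  set x : ι ⊕ κ → ℤ := Sum.elim (fun i => ⌊(α i : ℝ) * s₀⌋ + 1) fun j => -⌊(β j : ℝ) * s₀⌋
  have hx : ∑ i, x i = stepFun α β s₀ + Fintype.card ι := by
    simp only [x, stepFun, Fintype.sum_sum_type, Sum.elim_inl, Sum.elim_inr, sum_add_distrib,
      sum_neg_distrib, sum_const, card_univ, Int.nsmul_eq_mul, mul_one]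
    ring
  refine ⟨x, t, (Int.fract_nonneg s).trans_lt ht₀, ?_, ?_⟩
  · rintro (i | j)
    · simpa [x, landauVector, mul_comm] using htα i
    · have := (Int.floor_le ((β j : ℝ) * s₀)).trans_lt
        (mul_lt_mul_of_pos_left ht₀ (by exact_mod_cast hβ j))
      simp only [x, landauVector, Sum.elim_inr, Int.cast_neg]
      linarith
  · have : ((stepFun α β s₀ : ℤ) : ℝ) ≤ -1 := by exact_mod_cast (show stepFun α β s₀ ≤ -1 by omega)
    rw [← Int.cast_sum, hx]
    push_cast
    linarith

theorem exists_intCast_mem_openPolytope_iff (hβ : ∀ j, 0 < β j) (hsum : ∑ i, α i = ∑ j, β j) :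
    (∃ x : ι ⊕ κ → ℤ, (fun i => (x i : ℝ)) ∈ openPolytope (landauVector α β) (Fintype.card ι)) ↔
      ∃ s, stepFun α β s < 0 :=
  ⟨fun ⟨_, hx⟩ => stepFun_neg_of_intCast_mem_openPolytope α β hx,
    fun ⟨_, hs⟩ => exists_intCast_mem_openPolytope_of_stepFun_neg α β hβ hsum hs⟩

end Lattice

end Landau

/-- The ratio u_k(α,β) is an integer for every k iff nΔ(α,β)
contains no interior lattice points. -/
theorem stmt_0 (n m : ℕ) (hn : 0 < n) (hnm : n < m)
    (α : Fin n → ℕ) (β : Fin (m - n) → ℕ)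
    (hβ : ∀ j, 0 < β j)
    (hsum : ∑ i, α i = ∑ j, β j)
    (b : Fin m → ℝ)
    (hb : ∀ i : Fin m, b i = if h : (i : ℕ) < n then (α ⟨i, h⟩ : ℝ)
      else -(β ⟨(i : ℕ) - n, by have := i.isLt; omega⟩ : ℝ))
    (Δ : Set (Fin m → ℝ))
    (hΔ : Δ = convexHull ℝ
      ({0} ∪ Set.range (fun i : Fin m => Pi.single i (1 : ℝ)) ∪ {b})) :
    (∀ k : ℕ, (∏ j, Nat.factorial (β j * k)) ∣ ∏ i, Nat.factorial (α i * k)) ↔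
      ¬ ∃ x : Fin m → ℤ, (fun i => (x i : ℝ)) ∈ interior ((n : ℝ) • Δ) := by
  subst hΔ
  let e : Fin n ⊕ Fin (m - n) ≃ Fin m := finSumFinEquiv.trans (finCongr (by omega))
  have hbe : b ∘ e = Landau.landauVector α β := by
    ext (i | j) <;> simp [e, hb, Landau.landauVector]
  have hb₀ : ∑ i, b i = 0 := by
    rw [← e.sum_comp, ← Landau.sum_landauVector α β hsum, ← hbe]
    rfl
  have hlattice : (∃ x : Fin m → ℤ, (fun i => (x i : ℝ)) ∈ interior ((n : ℝ) • convexHull ℝ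
      ({0} ∪ Set.range (fun i : Fin m => Pi.single i (1 : ℝ)) ∪ {b}))) ↔
      ∃ s, Landau.stepFun α β s < 0 := by
    rw [interior_smul₀ (Nat.cast_ne_zero.2 hn.ne'), Landau.interior_convexHull_eq_openPolytope hb₀,
      Landau.smul_openPolytope (Nat.cast_pos.2 hn),
      ← Landau.exists_intCast_mem_openPolytope_iff α β hβ hsum, Fintype.card_fin]
    refine (e.arrowCongr (Equiv.refl ℤ)).symm.exists_congr fun x => ?_
    rw [← Landau.comp_mem_openPolytope_iff e, hbe]
    rfl
  rw [Landau.prod_factorial_dvd_iff α β hsum, hlattice]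
  simp only [not_exists, not_lt]
end

section
/- Let B = {b₁,…,b_N} ⊆ ℤ^m be a finite set whose convex hull Δ(B) is m-dimensional, set a_i = (b_i,1) ∈ ℤ^{m+1}, and let C(A) be the cone of nonnegative real linear combinations of a₁,…,a_N. Let k be the minimal positive integer such that kΔ(B) contains an interior lattice point, let u ∈ ℤ^m be an interior lattice point of kΔ(B), and set u⁽⁰⁾ = (u,k) ∈ ℤ^{m+1}. If v₁,…,v_N ∈ ℝ_{≥0} satisfy Σ_{i=1}^N v_i a_i = u⁽⁰⁾, then v_i ≤ 1 for all i. -/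
open Pointwise

/-! If `v i₀ > 1`, put `V = v i₀`. The remaining coefficients show `u - V • b i₀ ∈ (k - V) • Δ`,
and `u - b i₀ = ((V - 1) / V) • u + V⁻¹ • (u - V • b i₀)`. Since `Δ` is convex, `s • Δ + t • Δ`
is `(s + t) • Δ`, and adding a set to an open one gives an open set, so this makes `u - b i₀`
an interior lattice point of `(k - 1) • Δ`. That contradicts the minimality of `k`. -/

theorem Fin.sum_smul_snoc {ι R : Type*} [Semiring R] (s : Finset ι) {n : ℕ} (c : ι → R)
    (x : ι → Fin n → R) (r : ι → R) :
    ∑ i ∈ s, c i • Fin.snoc (α := fun _ => R) (x i) (r i) =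
      Fin.snoc (α := fun _ => R) (∑ i ∈ s, c i • x i) (∑ i ∈ s, c i * r i) := by
  ext j
  refine Fin.lastCases ?_ (fun j => ?_) j <;> simp [Finset.sum_apply]

theorem sum_smul_mem_sum_smul_convexHull {ι 𝕜 E : Type*} [Fintype ι] [Nonempty ι]
    [Field 𝕜] [LinearOrder 𝕜] [IsStrictOrderedRing 𝕜] [AddCommGroup E] [Module 𝕜 E] {c : ι → 𝕜}
    (hc : ∀ i, 0 ≤ c i) (z : ι → E) :
    ∑ i, c i • z i ∈ (∑ i, c i) • convexHull 𝕜 (Set.range z) := by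
  rcases eq_or_ne (∑ i, c i) 0 with h | h
  · have hc0 : ∀ i, c i = 0 := fun i =>
      (Finset.sum_eq_zero_iff_of_nonneg fun i _ => hc i).mp h i (Finset.mem_univ i)
    rw [h, Set.zero_smul_set ((Set.range_nonempty z).convexHull)]
    simp [hc0]
  · have hmem := Finset.centerMass_mem_convexHull Finset.univ (fun i _ => hc i)
      ((Finset.sum_nonneg fun i _ => hc i).lt_of_ne' h) fun i _ => Set.mem_range_self (f := z) i
    rw [Finset.centerMass] at hmem
    simpa [smul_inv_smul₀ h] using Set.smul_mem_smul_set (a := ∑ i, c i) hmem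

section

variable {E : Type*} [AddCommGroup E] [Module ℝ E] [TopologicalSpace E] [IsTopologicalAddGroup E]
  {s : Set E}

theorem Convex.interior_smul_add_smul_subset (hs : Convex ℝ s) {a b : ℝ} (ha : 0 ≤ a)
    (hb : 0 ≤ b) : interior (a • s) + b • s ⊆ interior ((a + b) • s) :=
  hs.add_smul ha hb ▸ subset_interior_add_left

theorem Convex.sub_mem_interior_smul [ContinuousConstSMul ℝ E] (hs : Convex ℝ s) {k V : ℝ}
    (hV : 1 < V) (hVk : V ≤ k) {x y : E} (hx : x ∈ interior (k • s))
    (hy : x - V • y ∈ (k - V) • s) :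
    x - y ∈ interior ((k - 1) • s) := by
  have hV0 : V ≠ 0 := by positivity
  have hV1 : 0 < (V - 1) / V := div_pos (by linarith) (by linarith)
  have hsplit : x - y = ((V - 1) / V) • x + V⁻¹ • (x - V • y) := by
    rw [smul_sub, inv_smul_smul₀ hV0]
    match_scalars <;> field_simp; ring
  have hscale : k - 1 = (V - 1) / V * k + V⁻¹ * (k - V) := by field_simp; ring
  rw [hsplit, hscale]
  refine hs.interior_smul_add_smul_subset (mul_nonneg hV1.le (by linarith))
    (mul_nonneg (inv_nonneg.2 (by linarith)) (by linarith))
    (Set.add_mem_add ?_ ?_)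
  · rw [mul_smul, interior_smul₀ hV1.ne']
    exact Set.smul_mem_smul_set hx
  · rw [mul_smul]
    exact Set.smul_mem_smul_set hy

end

theorem stmt_3_general (m N : ℕ)
    (b : Fin N → Fin m → ℤ)
    (Δ : Set (Fin m → ℝ))
    (hΔ : Δ = convexHull ℝ (Set.range fun i : Fin N => fun j => (b i j : ℝ)))
    (a : Fin N → Fin (m + 1) → ℝ)
    (ha : ∀ i, a i = Fin.snoc (fun j => (b i j : ℝ)) 1)
    (k : ℕ)
    (u : Fin m → ℤ)
    (hu : (fun j => (u j : ℝ)) ∈ interior ((k : ℝ) • Δ))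
    (hkmin : ∀ k' : ℕ, 0 < k' → k' < k →
      ¬ ∃ w : Fin m → ℤ, (fun j => (w j : ℝ)) ∈ interior ((k' : ℝ) • Δ))
    (v : Fin N → ℝ) (hv : ∀ i, 0 ≤ v i)
    (hva : ∑ i, v i • a i = Fin.snoc (fun j => (u j : ℝ)) (k : ℝ)) :
    ∀ i, v i ≤ 1 := by
  intro i₀
  by_contra! hv₀
  set B : Fin N → Fin m → ℝ := fun i j => (b i j : ℝ)
  simp only [ha, Fin.sum_smul_snoc, mul_one, Fin.snoc_inj] at hva
  obtain ⟨hvB, hvsum⟩ := hva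
  set c := v - Pi.single i₀ (v i₀)
  have hc : ∀ i, 0 ≤ c i := by
    intro i
    rcases eq_or_ne i i₀ with rfl | hi
    · simp [c]
    · simpa [c, hi] using hv i
  have hcsum : ∑ i, c i = k - v i₀ := by simp [c, Finset.sum_sub_distrib, hvsum]
  have hcB : ∑ i, c i • B i = (fun j => (u j : ℝ)) - v i₀ • B i₀ := by
    simp only [c, Pi.sub_apply, Pi.single_apply, sub_smul, ite_smul, zero_smul,
      Finset.sum_sub_distrib, Finset.sum_ite_eq', Finset.mem_univ, ↓reduceIte, sub_left_inj]
    exact hvB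
  have hvk : v i₀ ≤ k := hvsum ▸ Finset.single_le_sum (fun i _ => hv i) (Finset.mem_univ i₀)
  have hrest : (fun j => (u j : ℝ)) - v i₀ • B i₀ ∈ ((k : ℝ) - v i₀) • Δ := by
    have : Nonempty (Fin N) := ⟨i₀⟩
    simpa only [hΔ, hcsum, hcB] using sum_smul_mem_sum_smul_convexHull hc B
  have hΔconv : Convex ℝ Δ := hΔ ▸ convex_convexHull ℝ _
  have hinterior := hΔconv.sub_mem_interior_smul hv₀ hvk hu hrest
  have hk₂ : 2 ≤ k := by exact_mod_cast hv₀.trans_le hvk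
  refine hkmin (k - 1) (by omega) (by omega) ⟨u - b i₀, ?_⟩
  rw [Nat.cast_sub (by omega), Nat.cast_one]
  convert hinterior using 1
  ext j
  simp [B]

/-- If k is minimal with kΔ(B) containing an interior lattice
point u, and v₁,…,v_N ≥ 0 satisfy Σ vᵢ aᵢ = (u,k), then all vᵢ ≤ 1. -/
theorem stmt_3 (m N : ℕ) (hm : 0 < m) (hN : 0 < N)
    (b : Fin N → Fin m → ℤ)
    (Δ : Set (Fin m → ℝ))
    (hΔ : Δ = convexHull ℝ (Set.range fun i : Fin N => fun j => (b i j : ℝ)))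
    (hdim : affineSpan ℝ (Set.range fun i : Fin N => fun j => (b i j : ℝ)) = ⊤)
    (a : Fin N → Fin (m + 1) → ℝ)
    (ha : ∀ i, a i = Fin.snoc (fun j => (b i j : ℝ)) 1)
    (k : ℕ) (hk : 0 < k)
    (u : Fin m → ℤ)
    (hu : (fun j => (u j : ℝ)) ∈ interior ((k : ℝ) • Δ))
    (hkmin : ∀ k' : ℕ, 0 < k' → k' < k →
      ¬ ∃ w : Fin m → ℤ, (fun j => (w j : ℝ)) ∈ interior ((k' : ℝ) • Δ))
    (v : Fin N → ℝ) (hv : ∀ i, 0 ≤ v i)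
    (hva : ∑ i, v i • a i = Fin.snoc (fun j => (u j : ℝ)) (k : ℝ)) :
    ∀ i, v i ≤ 1 :=
  stmt_3_general m N b Δ hΔ a ha k u hu hkmin v hv hva
end

section
/- Let m = 2n+1 and let B = {b₁,…,b_N} ⊆ ℤ^m have m-dimensional convex hull Δ(B); set a_i = (b_i,1) ∈ ℤ^{m+1} and let C(A) be the cone of nonnegative real combinations of the a_i. Suppose nΔ(B) contains no interior lattice points, u is an interior lattice point of (n+1)Δ(B), and u⁽⁰⁾ = (u,n+1). Let p be a prime and let v₁,…,v_{2n+2} ∈ ℚ be p-integral with −1 < v_i ≤ 0 and Σ_{i=1}^{2n+2} v_i a_i = −u⁽⁰⁾. For each i let v′_i be the unique p-integral rational number with −1 < v′_i ≤ 0 and pv′_i − v_i ∈ ℤ. Then −Σ_{i=1}^{2n+2} v′_i a_i lies in ℤ^{2n+2}, is an interior lattice point of C(A), and its last coordinate equals n+1. -/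
/-!
With `aᵢ = (bᵢ, 1)` the cone `C` is the cone over `Δ` placed at height one: its slice at height
`t > 0` is `tΔ`, and likewise for interiors. If `x` is an interior lattice point of `C` of height
`h ≤ n`, then adding `(n - h) bᵢ` to its first coordinates gives an interior lattice point of
`nΔ`; so interior lattice points of `C` have height at least `n + 1`.

Write `p v′ᵢ = vᵢ + zᵢ` with `zᵢ ∈ ℤ`; since `p v′ᵢ ≤ 0` and `vᵢ > -1`, `zᵢ ≤ 0`. Then
`p (−∑ v′ᵢ aᵢ) = u⁽⁰⁾ − ∑ zᵢ aᵢ` is an integer vector in the interior of `C`; as the `v′ᵢ` are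
`p`-integral, `−∑ v′ᵢ aᵢ` is itself an interior lattice point. So is `∑ (1 + v′ᵢ) aᵢ`: it is
integral, and it is a strictly positive combination of the same `aᵢ` that express the interior
point `u⁽⁰⁾ = −∑ vᵢ aᵢ`. The heights of these two points add up to `2n + 2`, so both equal `n + 1`.
-/

open Pointwise Set Filter Topology

section ConicHull

variable {ι E : Type*} [Fintype ι] [AddCommGroup E] [Module ℝ E]

def conicHull (f : ι → E) : Set E :=
  {x | ∃ w : ι → ℝ, (∀ i, 0 ≤ w i) ∧ x = ∑ i, w i • f i}

variable {f : ι → E}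

theorem mem_conicHull_self (i : ι) : f i ∈ conicHull f := by
  classical
  exact ⟨Pi.single i 1, fun j => by by_cases h : j = i <;> simp [h], by simp [Pi.single_apply]⟩

theorem sum_smul_mem_conicHull {κ : Type*} (s : Finset κ) {c : κ → ℝ} {x : κ → E}
    (hc : ∀ k ∈ s, 0 ≤ c k) (hx : ∀ k ∈ s, x k ∈ conicHull f) :
    ∑ k ∈ s, c k • x k ∈ conicHull f := by
  choose! w hw hxw using hx
  refine ⟨fun i => ∑ k ∈ s, c k * w k i,
    fun i => Finset.sum_nonneg fun k hk => mul_nonneg (hc k hk) (hw k hk i), ?_⟩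
  simp_rw [Finset.sum_smul, mul_smul]
  rw [Finset.sum_comm]
  exact Finset.sum_congr rfl fun k hk => by rw [hxw k hk, Finset.smul_sum]

theorem smul_add_smul_mem_conicHull {a b : ℝ} (ha : 0 ≤ a) (hb : 0 ≤ b) {x y : E}
    (hx : x ∈ conicHull f) (hy : y ∈ conicHull f) : a • x + b • y ∈ conicHull f := by
  simpa using sum_smul_mem_conicHull Finset.univ (c := ![a, b]) (x := ![x, y])
    (by simp [Fin.forall_fin_two, ha, hb]) (by simp [Fin.forall_fin_two, hx, hy])

theorem convex_conicHull : Convex ℝ (conicHull f) :=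
  fun _ hx _ hy _ _ ha hb _ => smul_add_smul_mem_conicHull ha hb hx hy

theorem smul_mem_conicHull {t : ℝ} (ht : 0 ≤ t) {x : E} (hx : x ∈ conicHull f) :
    t • x ∈ conicHull f := by
  simpa using smul_add_smul_mem_conicHull ht le_rfl hx hx

variable [TopologicalSpace E] [ContinuousAdd E] [ContinuousConstSMul ℝ E]

theorem smul_add_mem_interior_conicHull {ε : ℝ} (hε : 0 < ε) {u y : E}
    (hu : u ∈ interior (conicHull f)) (hy : y ∈ conicHull f) :
    ε • u + y ∈ interior (conicHull f) := by
  let φ : E ≃ₜ E := (Homeomorph.smulOfNeZero ε hε.ne').trans (Homeomorph.addRight y)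
  have hφ : φ '' conicHull f ⊆ conicHull f := by
    rintro _ ⟨x, hx, rfl⟩
    simpa [φ] using smul_add_smul_mem_conicHull hε.le zero_le_one hx hy
  exact interior_mono hφ (φ.isOpenMap.image_interior_subset _ ⟨u, hu, rfl⟩)

theorem sum_smul_mem_interior_conicHull {κ : Type*} [Fintype κ] {x : κ → E}
    (hx : ∀ k, x k ∈ conicHull f) {c d : κ → ℝ} {t : ℝ} (ht : 0 < t)
    (hd : ∑ k, d k • x k ∈ interior (conicHull f)) (hdc : ∀ k, d k ≤ t * c k) :
    ∑ k, c k • x k ∈ interior (conicHull f) := by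
  have hsplit : ∑ k, c k • x k = t⁻¹ • ∑ k, d k • x k + ∑ k, (c k - t⁻¹ * d k) • x k := by
    simp [Finset.smul_sum, smul_smul, sub_smul]
  rw [hsplit]
  refine smul_add_mem_interior_conicHull (inv_pos.2 ht) hd
    (sum_smul_mem_conicHull _ (fun k _ => sub_nonneg.2 ?_) fun k _ => hx k)
  rw [inv_mul_le_iff₀ ht]
  exact hdc k

theorem sum_smul_mem_interior_conicHull_of_pos {κ : Type*} [Fintype κ] {x : κ → E}
    (hx : ∀ k, x k ∈ conicHull f) {c d : κ → ℝ}
    (hd : ∑ k, d k • x k ∈ interior (conicHull f)) (hc : ∀ k, 0 < c k) :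
    ∑ k, c k • x k ∈ interior (conicHull f) := by
  have hlarge : ∀ᶠ t in atTop, ∀ k, d k ≤ t * c k := eventually_all.2 fun k =>
    (tendsto_id.atTop_mul_const (hc k)).eventually_ge_atTop (d k)
  obtain ⟨t, hdc, ht⟩ := (hlarge.and (eventually_gt_atTop 0)).exists
  exact sum_smul_mem_interior_conicHull hx ht hd hdc

end ConicHull

section HomogenizedCone

variable {ι : Type*} [Fintype ι] {m : ℕ} (b : ι → Fin m → ℝ)

theorem sum_smul_snoc_one (w : ι → ℝ) :
    ∑ i, w i • (Fin.snoc (b i) 1 : Fin (m + 1) → ℝ) = Fin.snoc (∑ i, w i • b i) (∑ i, w i) := by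
  ext j
  induction j using Fin.lastCases <;> simp [Finset.sum_apply]

variable {b}

theorem last_nonneg_of_mem_conicHull_snoc {x : Fin (m + 1) → ℝ}
    (hx : x ∈ conicHull fun i => Fin.snoc (b i) 1) : 0 ≤ x (Fin.last m) := by
  obtain ⟨w, hw, rfl⟩ := hx
  rw [sum_smul_snoc_one, Fin.snoc_last]
  exact Finset.sum_nonneg fun i _ => hw i

theorem snoc_mem_conicHull_iff {t : ℝ} (ht : 0 < t) {y : Fin m → ℝ} :
    (Fin.snoc y t : Fin (m + 1) → ℝ) ∈ (conicHull fun i => Fin.snoc (b i) 1) ↔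
      y ∈ t • convexHull ℝ (range b) := by
  constructor
  · rintro ⟨w, hw, h⟩
    rw [sum_smul_snoc_one] at h
    obtain ⟨rfl, rfl⟩ := Fin.snoc_inj.1 h
    refine ⟨Finset.univ.centerMass w b, Finset.univ.centerMass_mem_convexHull (fun i _ => hw i) ht
      fun i _ => mem_range_self i, ?_⟩
    exact smul_inv_smul₀ ht.ne' _
  · rintro ⟨y, hy, rfl⟩
    have hslice : convexHull ℝ (range b) ⊆
        {y | (Fin.snoc y 1 : Fin (m + 1) → ℝ) ∈ conicHull fun i => Fin.snoc (b i) 1} := by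
      refine convexHull_min (range_subset_iff.2 fun i =>
        show (Fin.snoc (b i) 1 : Fin (m + 1) → ℝ) ∈ conicHull fun i => Fin.snoc (b i) 1 from
          mem_conicHull_self i) ?_
      intro y₁ hy₁ y₂ hy₂ α β hα hβ hαβ
      rw [mem_ofPred_eq]
      convert convex_conicHull hy₁ hy₂ hα hβ hαβ using 1
      ext j
      induction j using Fin.lastCases <;> simp [hαβ]
    convert smul_mem_conicHull ht.le (hslice hy) using 1
    ext j
    induction j using Fin.lastCases <;> simp

theorem snoc_mem_interior_conicHull_iff {t : ℝ} (ht : 0 < t) {y : Fin m → ℝ} :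
    (Fin.snoc y t : Fin (m + 1) → ℝ) ∈ interior (conicHull fun i => Fin.snoc (b i) 1) ↔
      y ∈ interior (t • convexHull ℝ (range b)) := by
  constructor
  · intro h
    have hcont : Continuous fun y' : Fin m → ℝ => (Fin.snoc y' t : Fin (m + 1) → ℝ) := by
      fun_prop
    exact mem_interior.2 ⟨_, fun y' hy' => (snoc_mem_conicHull_iff ht).1 (interior_subset hy'),
      isOpen_interior.preimage hcont, h⟩
  · rw [interior_smul₀ ht.ne']
    rintro ⟨y, hy, rfl⟩
    let ψ : (Fin (m + 1) → ℝ) → Fin m → ℝ := fun x => (x (Fin.last m))⁻¹ • Fin.init x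
    have hψ : ContinuousAt ψ (Fin.snoc (t • y) t) :=
      ((continuous_apply _).continuousAt.inv₀ (by simpa using ht.ne')).smul
        (continuous_pi fun j => continuous_apply _).continuousAt
    have hψy : ψ (Fin.snoc (t • y) t) = y := by
      simp [ψ, Fin.init_snoc, inv_smul_smul₀ ht.ne']
    rw [mem_interior_iff_mem_nhds]
    filter_upwards [hψ.preimage_mem_nhds (isOpen_interior.mem_nhds (hψy ▸ hy)),
      (isOpen_lt continuous_const (continuous_apply (Fin.last m))).mem_nhds (by simpa using ht)]
      with x hx hpos
    rw [← Fin.snoc_init_self x]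
    exact (snoc_mem_conicHull_iff hpos).2
      ⟨ψ x, interior_subset hx, smul_inv_smul₀ (ne_of_gt hpos) _⟩

theorem last_pos_of_mem_interior_conicHull_snoc {x : Fin (m + 1) → ℝ}
    (hx : x ∈ interior (conicHull fun i => Fin.snoc (b i) 1)) : 0 < x (Fin.last m) := by
  have himage : (fun x : Fin (m + 1) → ℝ => x (Fin.last m)) ''
      interior (conicHull fun i => Fin.snoc (b i) 1) ⊆ interior (Ici 0) :=
    ((isOpenMap_eval _).image_interior_subset _).trans
      (interior_mono (image_subset_iff.2 fun _ hx => last_nonneg_of_mem_conicHull_snoc hx))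
  simpa [interior_Ici] using himage ⟨x, hx, rfl⟩

end HomogenizedCone

theorem Convex.add_smul_mem_interior_add_smul {E : Type*} [AddCommGroup E] [Module ℝ E]
    [TopologicalSpace E] [ContinuousAdd E] {Δ : Set E} (hΔ : Convex ℝ Δ) {b₀ : E} (hb₀ : b₀ ∈ Δ)
    {s t : ℝ} (hs : 0 ≤ s) (ht : 0 ≤ t) {x : E} (hx : x ∈ interior (s • Δ)) :
    x + t • b₀ ∈ interior ((s + t) • Δ) := by
  rw [hΔ.add_smul hs ht]
  exact subset_interior_add_left (add_mem_add hx (smul_mem_smul_set hb₀))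

theorem add_one_le_last_of_mem_interior_conicHull {ι : Type*} [Fintype ι] [Nonempty ι] {m n : ℕ}
    {b : ι → Fin m → ℤ}
    (hnoint : ¬ ∃ x : Fin m → ℤ, (fun j => (x j : ℝ)) ∈
      interior ((n : ℝ) • convexHull ℝ (range fun i j => (b i j : ℝ))))
    {x : Fin (m + 1) → ℚ} (hint : ∀ j, ∃ z : ℤ, x j = z)
    (hx : (fun j => (x j : ℝ)) ∈ interior (conicHull fun i => Fin.snoc (fun j => (b i j : ℝ)) 1)) :
    (n : ℚ) + 1 ≤ x (Fin.last m) := by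
  choose X hX using hint
  obtain rfl : x = fun j => (X j : ℚ) := funext hX
  have hpos : (0 : ℝ) < X (Fin.last m) := by
    simpa using last_pos_of_mem_interior_conicHull_snoc hx
  rw [← Fin.snoc_init_self fun j => ((X j : ℚ) : ℝ)] at hx
  have hinit := (snoc_mem_interior_conicHull_iff (by simpa using hpos)).1 hx
  by_contra! hlt
  have hle : ((X (Fin.last m) : ℤ) : ℝ) ≤ n := by
    have : X (Fin.last m) < n + 1 := by exact_mod_cast hlt
    exact_mod_cast (by omega : X (Fin.last m) ≤ n)
  obtain ⟨i₀⟩ := ‹Nonempty ι›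
  have := (convex_convexHull ℝ _).add_smul_mem_interior_add_smul
    (subset_convexHull ℝ _ (mem_range_self i₀)) hpos.le (sub_nonneg.2 hle) (by simpa using hinit)
  rw [add_sub_cancel] at this
  refine hnoint ⟨fun j => X (Fin.castSucc j) + (n - X (Fin.last m)) * b i₀ j, ?_⟩
  convert this using 1
  ext j
  simp [Fin.init]

namespace Rat

theorem exists_intCast_eq_of_prime_mul_eq {p : ℕ} (hp : p.Prime) {q : ℚ} (hq : ¬ p ∣ q.den)
    {z : ℤ} (h : (p : ℚ) * q = z) : ∃ k : ℤ, q = k := by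
  have hq' : q = Rat.divInt z p := by
    rw [Rat.divInt_eq_div, ← h, Int.cast_natCast,
      mul_div_cancel_left₀ _ (by exact_mod_cast hp.ne_zero)]
  have hden : q.den ∣ p := Int.ofNat_dvd.1 (hq' ▸ Rat.den_dvd z p)
  rcases hp.eq_one_or_self_of_dvd _ hden with h1 | hpd
  · exact ⟨q.num, (Rat.den_eq_one_iff q).1 h1 |>.symm⟩
  · exact absurd (hpd ▸ dvd_rfl) hq

theorem not_dvd_den_sum_mul_intCast {κ : Type*} {p : ℕ} (hp : p.Prime) (s : Finset κ)
    {v : κ → ℚ} (hv : ∀ k ∈ s, ¬ p ∣ (v k).den) (c : κ → ℤ) :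
    ¬ p ∣ (∑ k ∈ s, v k * c k).den := by
  intro h
  have hprod : p ∣ ∏ k ∈ s, (v k).den :=
    h.trans <| (Finset.Rat.den_sum_dvd_prod_den _ _).trans <| Finset.prod_dvd_prod_of_dvd _ _
      fun k _ => by simpa using Rat.mul_den_dvd (v k) (c k)
  obtain ⟨k, hk, hpk⟩ := hp.prime.exists_mem_finset_dvd hprod
  exact hv k hk hpk

theorem exists_intCast_eq_sum_smul_apply_of_prime {κ ι : Type*} [Fintype κ] {p : ℕ}
    (hp : p.Prime) {x : κ → ι → ℚ} (hx : ∀ k j, ∃ z : ℤ, x k j = z) {v v' : κ → ℚ}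
    (hv : ∀ j, ∃ z : ℤ, (∑ k, v k • x k) j = z) (hv' : ∀ k, ¬ p ∣ (v' k).den)
    (hvv' : ∀ k, ∃ z : ℤ, p * v' k - v k = z) (j : ι) :
    ∃ z : ℤ, (∑ k, v' k • x k) j = z := by
  choose A hA using hx
  choose z hz using hvv'
  obtain ⟨U, hU⟩ := hv j
  simp only [Finset.sum_apply, Pi.smul_apply, smul_eq_mul, hA] at hU ⊢
  refine exists_intCast_eq_of_prime_mul_eq hp (not_dvd_den_sum_mul_intCast hp _
    (fun k _ => hv' k) _) (z := U + ∑ k, z k * A k j) ?_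
  have hpv' : ∀ k, (p : ℚ) * v' k = v k + z k := fun k => by linarith [hz k]
  push_cast
  simp only [Finset.mul_sum, ← mul_assoc, hpv', add_mul, Finset.sum_add_distrib, hU]

end Rat

theorem ratCast_sum_smul {κ ι : Type*} [Fintype κ] (w : κ → ℚ) (x : κ → ι → ℚ) :
    (fun j => ((∑ k, w k • x k) j : ℝ)) = ∑ k, (w k : ℝ) • fun j => (x k j : ℝ) := by
  ext j
  simp [Finset.sum_apply]

theorem mul_le_of_mul_sub_eq_intCast {R : Type*} [Field R] [LinearOrder R] [IsStrictOrderedRing R]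
    {c v v' : R} (hc : 0 ≤ c) (hv : -1 < v) (hv' : v' ≤ 0) {z : ℤ} (h : c * v' - v = z) :
    c * v' ≤ v := by
  have hz : (z : R) < 1 := by
    rw [← h]
    nlinarith [mul_nonpos_of_nonneg_of_nonpos hc hv']
  have : (z : R) ≤ 0 := by exact_mod_cast Int.lt_add_one_iff.1 (by exact_mod_cast hz)
  linarith

theorem exists_intCast_eq_snoc_apply {m : ℕ} (y : Fin m → ℤ) (t : ℤ) (j : Fin (m + 1)) :
    ∃ z : ℤ, (Fin.snoc (fun j => (y j : ℚ)) (t : ℚ) : Fin (m + 1) → ℚ) j = z :=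
  ⟨(Fin.snoc y t : Fin (m + 1) → ℤ) j, by induction j using Fin.lastCases <;> simp⟩

theorem stmt_5_general (n m N : ℕ)
    (b : Fin N → Fin m → ℤ)
    (Δ : Set (Fin m → ℝ))
    (hΔ : Δ = convexHull ℝ (Set.range fun i : Fin N => fun j => (b i j : ℝ)))
    (a : Fin N → Fin (m + 1) → ℚ)
    (ha : ∀ i, a i = Fin.snoc (fun j => (b i j : ℚ)) 1)
    (C : Set (Fin (m + 1) → ℝ))
    (hC : C = {x | ∃ w : Fin N → ℝ, (∀ i, 0 ≤ w i) ∧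
      x = ∑ i, w i • fun j => ((a i j : ℚ) : ℝ)})
    (hnoint : ¬ ∃ x : Fin m → ℤ, (fun i => (x i : ℝ)) ∈ interior ((n : ℝ) • Δ))
    (u : Fin m → ℤ)
    (hu : (fun j => (u j : ℝ)) ∈ interior (((n : ℝ) + 1) • Δ))
    (hN : 2 * n + 2 ≤ N)
    (p : ℕ) (hp : p.Prime)
    (v : Fin (2 * n + 2) → ℚ)
    (hv1 : ∀ i, -1 < v i ∧ v i ≤ 0)
    (hveq : ∑ i, v i • a (Fin.castLE hN i) =
      -(Fin.snoc (fun j => (u j : ℚ)) ((n : ℚ) + 1)))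
    (v' : Fin (2 * n + 2) → ℚ)
    (hv'int : ∀ i, ¬ (p ∣ (v' i).den))
    (hv'1 : ∀ i, -1 < v' i ∧ v' i ≤ 0)
    (hv'v : ∀ i, ∃ z : ℤ, (p : ℚ) * v' i - v i = z) :
    (∀ j : Fin (m + 1), ∃ z : ℤ, (-(∑ i, v' i • a (Fin.castLE hN i))) j = z) ∧
      (fun j => (((-(∑ i, v' i • a (Fin.castLE hN i))) j : ℚ) : ℝ)) ∈ interior C ∧
      (-(∑ i, v' i • a (Fin.castLE hN i))) (Fin.last m) = (n : ℚ) + 1 := by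
  have hsnoc : (fun i j => (a i j : ℝ)) = fun i => Fin.snoc (fun j => (b i j : ℝ)) 1 := by
    ext i j; rw [ha]; induction j using Fin.lastCases <;> simp
  replace hC : C = conicHull fun i j => (a i j : ℝ) := hC
  subst hΔ hC
  have : Nonempty (Fin N) := ⟨⟨0, by omega⟩⟩
  set x := fun k => a (Fin.castLE hN k)
  have hxint : ∀ k j, ∃ z : ℤ, x k j = z := fun k j => by
    simpa [x, ha] using exists_intCast_eq_snoc_apply (b (Fin.castLE hN k)) 1 j
  have hvint : ∀ j, ∃ z : ℤ, (∑ k, v k • x k) j = z := fun j => by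
    obtain ⟨z, hz⟩ := exists_intCast_eq_snoc_apply u (n + 1) j
    push_cast at hz
    exact ⟨-z, by rw [hveq, Pi.neg_apply, hz, Int.cast_neg]⟩
  have hSint : ∀ j, ∃ z : ℤ, (-∑ k, v' k • x k) j = z := fun j => by
    obtain ⟨z, hz⟩ := Rat.exists_intCast_eq_sum_smul_apply_of_prime hp hxint hvint hv'int hv'v j
    exact ⟨-z, by simp [hz]⟩
  have hTint := Rat.exists_intCast_eq_sum_smul_apply_of_prime (v' := fun k => 1 + v' k) hp
    hxint hvint (fun k => by simpa [add_comm] using hv'int k) fun k => by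
      obtain ⟨z, hz⟩ := hv'v k
      exact ⟨p + z, by push_cast; linarith⟩
  have hlast :
      (-∑ k, v' k • x k) (Fin.last m) + (∑ k, (1 + v' k) • x k) (Fin.last m) = 2 * n + 2 := by
    simp [x, Finset.sum_apply, ha, Finset.sum_add_distrib]
  have hgen : ∀ k, (fun j => (x k j : ℝ)) ∈ conicHull fun i j => (a i j : ℝ) :=
    fun k => mem_conicHull_self _
  have hu0 : ∑ k, ((-v k : ℚ) : ℝ) • (fun j => (x k j : ℝ)) ∈
      interior (conicHull fun i j => (a i j : ℝ)) := by
    have hveqR : ∑ k, (v k : ℝ) • (fun j => (x k j : ℝ)) =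
        -Fin.snoc (fun j => (u j : ℝ)) ((n : ℝ) + 1) := by
      rw [← ratCast_sum_smul, hveq]
      ext j
      induction j using Fin.lastCases <;> simp
    simpa [Finset.sum_neg_distrib, hveqR, hsnoc] using
      (snoc_mem_interior_conicHull_iff (by positivity)).2 hu
  have hSC : (fun j => ((-∑ k, v' k • x k) j : ℝ)) ∈
      interior (conicHull fun i j => (a i j : ℝ)) := by
    simp only [← Finset.sum_neg_distrib, ← neg_smul, ratCast_sum_smul]
    refine sum_smul_mem_interior_conicHull hgen (t := p) (by exact_mod_cast hp.pos) hu0 fun k => ?_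
    obtain ⟨z, hz⟩ := hv'v k
    have := mul_le_of_mul_sub_eq_intCast (Nat.cast_nonneg p) (hv1 k).1 (hv'1 k).2 hz
    exact_mod_cast (by linarith : -v k ≤ p * -v' k)
  have hTC : (fun j => ((∑ k, (1 + v' k) • x k) j : ℝ)) ∈
      interior (conicHull fun i j => (a i j : ℝ)) := by
    rw [ratCast_sum_smul]
    exact sum_smul_mem_interior_conicHull_of_pos hgen hu0 fun k =>
      by exact_mod_cast (by linarith [(hv'1 k).1] : (0 : ℚ) < 1 + v' k)
  rw [hsnoc] at hSC hTC
  have h1 := add_one_le_last_of_mem_interior_conicHull hnoint hSint hSC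
  have h2 := add_one_le_last_of_mem_interior_conicHull hnoint hTint hTC
  exact ⟨hSint, hsnoc ▸ hSC, by linarith⟩

/-- the Frobenius-transformed point −Σ v′ᵢaᵢ is an interior
lattice point of C(A) with last coordinate n+1. -/
theorem stmt_5 (n m N : ℕ) (hm : m = 2 * n + 1)
    (b : Fin N → Fin m → ℤ)
    (Δ : Set (Fin m → ℝ))
    (hΔ : Δ = convexHull ℝ (Set.range fun i : Fin N => fun j => (b i j : ℝ)))
    (hdim : affineSpan ℝ (Set.range fun i : Fin N => fun j => (b i j : ℝ)) = ⊤)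
    (a : Fin N → Fin (m + 1) → ℚ)
    (ha : ∀ i, a i = Fin.snoc (fun j => (b i j : ℚ)) 1)
    (C : Set (Fin (m + 1) → ℝ))
    (hC : C = {x | ∃ w : Fin N → ℝ, (∀ i, 0 ≤ w i) ∧
      x = ∑ i, w i • fun j => ((a i j : ℚ) : ℝ)})
    (hnoint : ¬ ∃ x : Fin m → ℤ, (fun i => (x i : ℝ)) ∈ interior ((n : ℝ) • Δ))
    (u : Fin m → ℤ)
    (hu : (fun j => (u j : ℝ)) ∈ interior (((n : ℝ) + 1) • Δ))
    (hN : 2 * n + 2 ≤ N)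
    (p : ℕ) (hp : p.Prime)
    (v : Fin (2 * n + 2) → ℚ)
    (hvint : ∀ i, ¬ (p ∣ (v i).den))
    (hv1 : ∀ i, -1 < v i ∧ v i ≤ 0)
    (hveq : ∑ i, v i • a (Fin.castLE hN i) =
      -(Fin.snoc (fun j => (u j : ℚ)) ((n : ℚ) + 1)))
    (v' : Fin (2 * n + 2) → ℚ)
    (hv'int : ∀ i, ¬ (p ∣ (v' i).den))
    (hv'1 : ∀ i, -1 < v' i ∧ v' i ≤ 0)
    (hv'v : ∀ i, ∃ z : ℤ, (p : ℚ) * v' i - v i = z) :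
    (∀ j : Fin (m + 1), ∃ z : ℤ, (-(∑ i, v' i • a (Fin.castLE hN i))) j = z) ∧
      (fun j => (((-(∑ i, v' i • a (Fin.castLE hN i))) j : ℚ) : ℝ)) ∈ interior C ∧
      (-(∑ i, v' i • a (Fin.castLE hN i))) (Fin.last m) = (n : ℚ) + 1 :=
  stmt_5_general n m N b Δ hΔ a ha C hC hnoint u hu hN p hp v hv1 hveq v' hv'int hv'1 hv'v
end

section
/- Let n < m be positive integers with m > 2n and let α₁,…,αₙ, β_{n+1},…,β_m be positive integers with α₁+⋯+αₙ = β_{n+1}+⋯+β_m. Set b₀ = 0 ∈ ℤ^m, b_i = e_i for i = 1,…,m, and b_{m+1} = (α₁,…,αₙ,−β_{n+1},…,−β_m). Let Q ⊆ {0,1,…,m+1} be a subset with card(Q) ≤ n+1 and Q ≠ {0,1,…,n}. Then the points b_q for q ∈ Q lie on a common proper face of Δ(α,β): there exist a linear functional φ on ℝ^m and c ∈ ℝ such that φ(x) ≤ c for all x ∈ Δ(α,β), φ(b_q) = c for all q ∈ Q, and φ(x) < c for some x ∈ Δ(α,β). -/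
/-!
The vertices 0, e₁, …, e_m, b_{m+1} of Δ(α,β) satisfy exactly one affine dependence, with
coefficients λ = (-1, -α, β, 1), negative precisely on {0, …, n}. As 0, e₁, …, e_m are affinely
independent, a vector s of slacks c - φ(b_q) comes from a linear functional φ iff ∑ λ_q s_q = 0.
For p ≤ n < r the nonnegative vector λ_r δ_p - λ_p δ_r is such a slack vector, so it cuts out a
face containing every vertex except b_p and b_r, and missing b_p. A set Q as in the theorem misses
some p ≤ n because Q ≠ {0, …, n}, and some r > n because #Q ≤ n + 1 < m + 1 - n.
-/

open Finset

namespace CircuitSimplex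

variable {m : ℕ}

noncomputable def vertex (d : Fin m → ℝ) : Fin (m + 2) → Fin m → ℝ :=
  Fin.cons 0 (Fin.snoc (fun i => Pi.single i 1) d)

noncomputable def circuit (d : Fin m → ℝ) : Fin (m + 2) → ℝ :=
  Fin.cons (∑ i, d i - 1) (Fin.snoc (-d) 1)

@[simp] lemma vertex_zero (d : Fin m → ℝ) : vertex d 0 = 0 := rfl
@[simp] lemma vertex_succ_castSucc (d : Fin m → ℝ) (i : Fin m) :
    vertex d i.castSucc.succ = Pi.single i 1 := by simp [vertex]
@[simp] lemma vertex_last (d : Fin m → ℝ) : vertex d (Fin.last (m + 1)) = d := by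
  simp [vertex, ← Fin.succ_last]

@[simp] lemma circuit_zero (d : Fin m → ℝ) : circuit d 0 = ∑ i, d i - 1 := rfl
@[simp] lemma circuit_succ_castSucc (d : Fin m → ℝ) (i : Fin m) :
    circuit d i.castSucc.succ = -d i := by simp [circuit]
@[simp] lemma circuit_last (d : Fin m → ℝ) : circuit d (Fin.last (m + 1)) = 1 := by
  simp [circuit, ← Fin.succ_last]

lemma sum_circuit_mul (d : Fin m → ℝ) (s : Fin (m + 2) → ℝ) :
    ∑ q, circuit d q * s q =
      (∑ i, d i - 1) * s 0 - ∑ i, d i * s i.castSucc.succ + s (Fin.last (m + 1)) := by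
  rw [Fin.sum_univ_succ, Fin.sum_univ_castSucc]
  simp only [circuit_zero, circuit_succ_castSucc, neg_mul, sum_neg_distrib, Fin.succ_last,
    circuit_last, one_mul]
  ring

theorem exists_linearMap_eq_sub_of_sum_circuit_mul_eq_zero (d : Fin m → ℝ) (s : Fin (m + 2) → ℝ)
    (hs : ∑ q, circuit d q * s q = 0) :
    ∃ φ : (Fin m → ℝ) →ₗ[ℝ] ℝ, ∃ c : ℝ, ∀ q, φ (vertex d q) = c - s q := by
  refine ⟨Fintype.linearCombination ℝ fun i => s 0 - s i.castSucc.succ, s 0, fun q => ?_⟩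
  refine Fin.cases (by simp) (fun q => Fin.lastCases ?_ (fun i => ?_) q) q
  · rw [Fin.succ_last, vertex_last, Fintype.linearCombination_apply]
    rw [sum_circuit_mul] at hs
    simp only [smul_eq_mul, mul_sub, sum_sub_distrib, ← sum_mul]
    linarith
  · simp [Fintype.linearCombination_apply_single]

theorem exists_face_of_circuit_neg_of_circuit_pos (d : Fin m → ℝ) {p r : Fin (m + 2)}
    (hp : circuit d p < 0) (hr : 0 < circuit d r) :
    ∃ φ : (Fin m → ℝ) →ₗ[ℝ] ℝ, ∃ c : ℝ,
      (∀ x ∈ convexHull ℝ (Set.range (vertex d)), φ x ≤ c) ∧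
      (∀ q, q ≠ p → q ≠ r → φ (vertex d q) = c) ∧ φ (vertex d p) < c := by
  have hpr : p ≠ r := by rintro rfl; linarith
  set s : Fin (m + 2) → ℝ := Pi.single p (circuit d r) + Pi.single r (-circuit d p)
  have hs0 : 0 ≤ s := add_nonneg (Pi.single_nonneg.2 hr.le) (Pi.single_nonneg.2 (by linarith))
  have hs : ∑ q, circuit d q * s q = 0 := by
    simp only [s, Pi.add_apply, Pi.single_apply, mul_add, mul_ite, mul_zero, mul_neg,
      sum_add_distrib, sum_ite_eq', mem_univ, if_true]
    ring
  obtain ⟨φ, c, hφ⟩ := exists_linearMap_eq_sub_of_sum_circuit_mul_eq_zero d s hs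
  refine ⟨φ, c, fun x hx => ?_, fun q hqp hqr => ?_, ?_⟩
  · refine convexHull_min ?_ (convex_halfSpace_le φ.isLinear c) hx
    rintro _ ⟨q, rfl⟩
    simpa [hφ] using hs0 q
  · simp [hφ, s, hqp, hqr]
  · simp [hφ, s, hpr.symm, hr]

variable {n : ℕ} {d : Fin m → ℝ}

lemma circuit_neg (hnm : n ≤ m) (hsum : ∑ i, d i = 0) (hpos : ∀ i : Fin m, (i : ℕ) < n → 0 < d i)
    {q : Fin (m + 2)} (hq : (q : ℕ) ≤ n) : circuit d q < 0 := by
  induction q using Fin.cases with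
  | zero => simp [hsum]
  | succ q =>
    induction q using Fin.lastCases with
    | last => simp at hq; omega
    | cast i => simpa using hpos i (by simp at hq; omega)

lemma circuit_pos (hneg : ∀ i : Fin m, n ≤ (i : ℕ) → d i < 0) {q : Fin (m + 2)} (hq : n < (q : ℕ)) :
    0 < circuit d q := by
  induction q using Fin.cases with
  | zero => simp at hq
  | succ q =>
    induction q using Fin.lastCases with
    | last => simp
    | cast i => simpa using hneg i (by simp at hq; omega)

end CircuitSimplex

lemma Fin.sum_dite_val_lt {M : Type*} [AddCommMonoid M] {n m : ℕ} (hnm : n ≤ m)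
    (f : Fin n → M) (g : Fin (m - n) → M) :
    ∑ i : Fin m, (if h : (i : ℕ) < n then f ⟨i, h⟩
      else g ⟨(i : ℕ) - n, by have := i.isLt; omega⟩) = ∑ i, f i + ∑ j, g j := by
  refine Eq.trans ?_ (Fintype.sum_sum_type (Sum.elim f g))
  refine (Fintype.sum_equiv (finSumFinEquiv.trans (finCongr (by omega))) _ _ fun x => ?_).symm
  rcases x with j | k
  · simp
  · simp only [Sum.elim_inr, Equiv.trans_apply, finSumFinEquiv_apply_right, finCongr_apply,
      Fin.val_cast, Fin.val_natAdd]
    rw [dif_neg (by omega)]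
    congr 1
    ext
    simp

lemma Fin.card_filter_val_le {k n : ℕ} (h : n < k) :
    #{q : Fin k | (q : ℕ) ≤ n} = n + 1 := by
  simp_rw [← Nat.lt_succ_iff, Fin.card_filter_val_lt]
  omega

open CircuitSimplex in
/-- if Q ⊆ {0,…,m+1} has card ≤ n+1 and Q ≠ {0,…,n}, then the
points b_q, q ∈ Q, lie on a common proper face of Δ(α,β). -/
theorem stmt_6 (n m : ℕ) (hnm : 2 * n < m)
    (α : Fin n → ℕ) (β : Fin (m - n) → ℕ)
    (hα : ∀ i, 0 < α i) (hβ : ∀ j, 0 < β j)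
    (hsum : ∑ i, α i = ∑ j, β j)
    (b : Fin (m + 2) → Fin m → ℝ)
    (hb0 : b 0 = 0)
    (hbe : ∀ q : Fin (m + 2), ∀ hq1 : 1 ≤ (q : ℕ), (q : ℕ) ≤ m →
      ∀ i : Fin m, b q i = if (i : ℕ) + 1 = (q : ℕ) then 1 else 0)
    (hbm : ∀ i : Fin m, b ⟨m + 1, by omega⟩ i =
      if h : (i : ℕ) < n then (α ⟨i, h⟩ : ℝ)
      else -(β ⟨(i : ℕ) - n, by have := i.isLt; omega⟩ : ℝ))
    (Δ : Set (Fin m → ℝ))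
    (hΔ : Δ = convexHull ℝ (Set.range b))
    (Q : Finset (Fin (m + 2)))
    (hQcard : Q.card ≤ n + 1)
    (hQne : Q ≠ Finset.univ.filter (fun q : Fin (m + 2) => (q : ℕ) ≤ n)) :
    ∃ φ : (Fin m → ℝ) →ₗ[ℝ] ℝ, ∃ c : ℝ,
      (∀ x ∈ Δ, φ x ≤ c) ∧ (∀ q ∈ Q, φ (b q) = c) ∧ (∃ x ∈ Δ, φ x < c) := by
  set d : Fin m → ℝ := fun i => if h : (i : ℕ) < n then (α ⟨i, h⟩ : ℝ)
    else -(β ⟨(i : ℕ) - n, by have := i.isLt; omega⟩ : ℝ)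
  have hb : b = vertex d := by
    funext q
    induction q using Fin.cases with
    | zero => exact hb0
    | succ q =>
      induction q using Fin.lastCases with
      | last => rw [Fin.succ_last, vertex_last]; exact funext hbm
      | cast i =>
        funext j
        rw [hbe _ (by simp) (by simp), vertex_succ_castSucc, Pi.single_apply]
        simp [Fin.ext_iff]
  have hd : ∑ i, d i = 0 := by
    refine (Fin.sum_dite_val_lt (by omega) (fun i => (α i : ℝ)) (fun j => -(β j : ℝ))).trans ?_
    rw [sum_neg_distrib, ← sub_eq_add_neg, sub_eq_zero]
    exact_mod_cast hsum
  set R : Finset (Fin (m + 2)) := {q | (q : ℕ) ≤ n}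
  have hR : #R = n + 1 := Fin.card_filter_val_le (by omega)
  obtain ⟨p, hpR, hpQ⟩ := not_subset.1 fun hRQ => hQne (eq_of_subset_of_card_le hRQ (by omega)).symm
  obtain ⟨r, hrR, hrQ⟩ := exists_mem_notMem_of_card_lt_card (s := Q) (t := Rᶜ)
    (by rw [card_compl, hR, Fintype.card_fin]; omega)
  have hpn : (p : ℕ) ≤ n := by simpa [R] using hpR
  have hrn : n < (r : ℕ) := by simpa [R] using hrR
  obtain ⟨φ, c, hle, heq, hlt⟩ := exists_face_of_circuit_neg_of_circuit_pos d
    (circuit_neg (by omega) hd (fun i hi => by simp [d, hi, hα]) hpn)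
    (circuit_pos (fun i hi => by simp [d, hi.not_gt, hβ]) hrn)
  subst hb hΔ
  exact ⟨φ, c, hle, fun q hq => heq q (ne_of_mem_of_not_mem hq hpQ) (ne_of_mem_of_not_mem hq hrQ),
    _, subset_convexHull ℝ _ (Set.mem_range_self p), hlt⟩
end

section
/- Let B = {b₁,…,b₇} ⊆ ℤ⁵ where b₁,…,b₅ are the standard unit basis vectors of ℝ⁵, b₆ = (9,1,−5,−3,−2), and b₇ = 0, and let Δ(B) ⊆ ℝ⁵ be the convex hull of B. Then the dilated polytope 2Δ(B) contains no interior lattice points, while (2,1,−1,0,0) ∈ ℤ⁵ is an interior lattice point of 3Δ(B). -/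
/-! An interior point of `t • Δ` satisfies every inequality `f ≤ c` valid on the vertices of `Δ`
(with `f` a nonzero linear functional) strictly, as `f < t * c`, because a nonzero functional is an
open map. For an integral point of `2 • Δ`, twelve integral inequalities valid on `B` thus become
`a ⬝ᵥ x ≤ 2 * c - 1`, and this integer system is infeasible.

Since `0 ∈ B` and `e₁, …, e₅, b₆` span `ℝ⁵`, the linear combinations of these six vectors with
positive weights of total less than `1` form an open subset of `Δ`, and `(2, 1, -1, 0, 0) / 3` is
such a combination. -/

open Pointwise Set

theorem apply_lt_of_mem_interior_smul_convexHull {E : Type*} [NormedAddCommGroup E]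
    [NormedSpace ℝ E] [FiniteDimensional ℝ E] {f : E →ₗ[ℝ] ℝ} (hf : f ≠ 0) {s : Set E} {c : ℝ}
    (hs : ∀ y ∈ s, f y ≤ c) {t : ℝ} (ht : 0 ≤ t) {x : E}
    (hx : x ∈ interior (t • convexHull ℝ s)) : f x < t * c := by
  have hsub : t • convexHull ℝ s ⊆ f ⁻¹' Iic (t * c) := by
    rintro _ ⟨y, hy, rfl⟩
    have hyc : f y ≤ c := convexHull_min hs ((convex_Iic c).linear_preimage f) hy
    simpa using mul_le_mul_of_nonneg_left hyc ht
  have hopen : IsOpenMap f :=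
    f.isOpenMap_of_finiteDimensional (LinearMap.surjective_of_ne_zero hf)
  have := interior_mono hsub hx
  rwa [← hopen.preimage_interior_eq_interior_preimage f.continuous_of_finiteDimensional,
    interior_Iic] at this

theorem sum_smul_mem_interior_convexHull {ι E : Type*} [Fintype ι] [NormedAddCommGroup E]
    [NormedSpace ℝ E] [FiniteDimensional ℝ E] {s : Set E} {v : ι → E} (h0 : 0 ∈ s)
    (hv : ∀ i, v i ∈ s) (hspan : Submodule.span ℝ (range v) = ⊤) {w : ι → ℝ}
    (hw : ∀ i, 0 < w i) (hw1 : ∑ i, w i < 1) : ∑ i, w i • v i ∈ interior (convexHull ℝ s) := by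
  set L := Fintype.linearCombination ℝ v
  set U : Set (ι → ℝ) := univ.pi (fun _ => Ioi 0) ∩ {w | ∑ i, w i < 1}
  have hL : Function.Surjective L := by
    rw [← LinearMap.range_eq_top, Fintype.range_linearCombination, hspan]
  have hU : IsOpen U := (isOpen_set_pi finite_univ fun _ _ => isOpen_Ioi).inter
    (isOpen_lt (continuous_finsetSum _ fun i _ => continuous_apply i) continuous_const)
  have hLU : L '' U ⊆ convexHull ℝ s := by
    rintro _ ⟨u, ⟨hu, hu1 : ∑ i, u i < 1⟩, rfl⟩
    have hu0 (i : ι) : 0 ≤ u i := le_of_lt (mem_univ_pi.1 hu i)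
    have := (convex_convexHull ℝ s).sum_mem (t := Finset.univ)
      (w := fun o : Option ι => o.elim (1 - ∑ i, u i) u) (z := fun o => o.elim 0 v)
      (by rintro (_ | i) - <;> simp [hu0, hu1.le]) (by simp [Fintype.sum_option])
      (by rintro (_ | i) - <;> simp [subset_convexHull ℝ s h0, subset_convexHull ℝ s (hv _)])
    simpa [Fintype.sum_option, L, Fintype.linearCombination_apply] using this
  exact interior_maximal hLU (L.isOpenMap_of_finiteDimensional hL U hU)
    ⟨w, ⟨fun i _ => hw i, hw1⟩, rfl⟩

theorem dotProduct_lt_of_mem_interior_smul_convexHull {ι : Type*} {n : ℕ} {v : ι → Fin n → ℤ}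
    {a : Fin n → ℤ} (ha : a ≠ 0) {c : ℤ} (hv : ∀ k, a ⬝ᵥ v k ≤ c) {t : ℕ} {x : Fin n → ℤ}
    (hx : (fun i => (x i : ℝ)) ∈
      interior ((t : ℝ) • convexHull ℝ (range fun k i => (v k i : ℝ)))) :
    a ⬝ᵥ x < t * c := by
  set f := dotProductBilin ℝ ℝ (Int.cast ∘ a : Fin n → ℝ)
  have hf_cast (y : Fin n → ℤ) : f (fun i => (y i : ℝ)) = ((a ⬝ᵥ y : ℤ) : ℝ) := by
    simp [f, dotProduct]
  have hf : f ≠ 0 := by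
    intro h
    have := hf_cast a
    rw [h, LinearMap.zero_apply, eq_comm, Int.cast_eq_zero, dotProduct_self_eq_zero] at this
    exact ha this
  have hs : ∀ y ∈ range fun k i => (v k i : ℝ), f y ≤ c := by
    rintro _ ⟨k, rfl⟩
    exact (hf_cast (v k)).trans_le (Int.cast_le.2 (hv k))
  have := apply_lt_of_mem_interior_smul_convexHull hf hs t.cast_nonneg hx
  exact_mod_cast (hf_cast x) ▸ this

def vertexB : Fin 7 → Fin 5 → ℤ :=
  ![![1, 0, 0, 0, 0], ![0, 1, 0, 0, 0], ![0, 0, 1, 0, 0], ![0, 0, 0, 1, 0], ![0, 0, 0, 0, 1],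
    ![9, 1, -5, -3, -2], ![0, 0, 0, 0, 0]]

theorem not_exists_intCast_mem_interior_two_smul_convexHull_vertexB :
    ¬ ∃ x : Fin 5 → ℤ, (fun i => (x i : ℝ)) ∈
      interior ((2 : ℝ) • convexHull ℝ (range fun k i => (vertexB k i : ℝ))) := by
  rintro ⟨x, hx⟩
  have key (a : Fin 5 → ℤ) (c : ℤ) (ha : a ≠ 0) (hv : ∀ k, a ⬝ᵥ vertexB k ≤ c) :
      a ⬝ᵥ x < 2 * c := by
    exact_mod_cast dotProduct_lt_of_mem_interior_smul_convexHull (t := 2) ha hv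
      (by exact_mod_cast hx)
  have h₁ := key ![-5, 0, -9, 0, 0] 0 (by decide) (by decide)
  have h₂ := key ![-2, 0, 0, 0, -9] 0 (by decide) (by decide)
  have h₃ := key ![-1, 0, 0, -3, 0] 0 (by decide) (by decide)
  have h₄ := key ![-1, 0, 0, 0, 0] 0 (by decide) (by decide)
  have h₅ := key ![0, -5, -1, 0, 0] 0 (by decide) (by decide)
  have h₆ := key ![0, -3, 0, -1, 0] 0 (by decide) (by decide)
  have h₇ := key ![0, -2, 0, 0, -1] 0 (by decide) (by decide)
  have h₈ := key ![0, -1, 0, 0, 0] 0 (by decide) (by decide)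
  have h₉ := key ![1, 1, 1, 1, 1] 1 (by decide) (by decide)
  have h₁₀ := key ![2, 2, 2, 2, 1] 2 (by decide) (by decide)
  have h₁₁ := key ![3, 3, 3, 2, 3] 3 (by decide) (by decide)
  have h₁₂ := key ![5, 5, 4, 5, 5] 5 (by decide) (by decide)
  simp only [dotProduct, Fin.sum_univ_five, Matrix.cons_val, Matrix.cons_val_zero,
    Matrix.cons_val_one, zero_mul, add_zero, zero_add, one_mul, neg_mul]
    at h₁ h₂ h₃ h₄ h₅ h₆ h₇ h₈ h₉ h₁₀ h₁₁ h₁₂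
  omega

theorem mem_interior_three_smul_convexHull_vertexB :
    ![(2 : ℝ), 1, -1, 0, 0] ∈
      interior ((3 : ℝ) • convexHull ℝ (range fun k i => (vertexB k i : ℝ))) := by
  set v : Fin 6 → Fin 5 → ℝ := fun k i => vertexB k.castSucc i
  set w : Fin 6 → ℝ := ![1 / 42, 11 / 42, 1 / 42, 9 / 42, 6 / 42, 3 / 42]
  have hspan : Submodule.span ℝ (range v) = ⊤ := by
    refine eq_top_iff.2 ((Pi.basisFun ℝ (Fin 5)).span_eq ▸ Submodule.span_mono ?_)
    rintro _ ⟨i, rfl⟩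
    refine ⟨i.castSucc, ?_⟩
    funext j; fin_cases i <;> fin_cases j <;> simp [v, vertexB]
  have hzero : (0 : Fin 5 → ℝ) ∈ range fun k i => (vertexB k i : ℝ) :=
    ⟨6, by funext i; fin_cases i <;> simp [vertexB]⟩
  have hmem := sum_smul_mem_interior_convexHull hzero (v := v)
    (fun k => mem_range_self k.castSucc) hspan (w := w)
    (by intro k; fin_cases k <;> norm_num [w]) (by simp [w, Fin.sum_univ_six]; norm_num)
  rw [interior_smul₀ three_ne_zero]
  convert smul_mem_smul_set (a := (3 : ℝ)) hmem using 1
  funext i; fin_cases i <;> simp [v, w, Fin.sum_univ_six, vertexB] <;> norm_num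

/-- for B = {e₁,…,e₅,(9,1,−5,−3,−2),0} ⊆ ℤ⁵, the polytope 2Δ(B)
has no interior lattice points, while (2,1,−1,0,0) is interior to 3Δ(B). -/
theorem stmt_16
    (b : Fin 7 → Fin 5 → ℝ)
    (hb : b = ![![1, 0, 0, 0, 0], ![0, 1, 0, 0, 0], ![0, 0, 1, 0, 0],
      ![0, 0, 0, 1, 0], ![0, 0, 0, 0, 1], ![9, 1, -5, -3, -2],
      ![0, 0, 0, 0, 0]])
    (Δ : Set (Fin 5 → ℝ))
    (hΔ : Δ = convexHull ℝ (Set.range b)) :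
    (¬ ∃ x : Fin 5 → ℤ, (fun i => (x i : ℝ)) ∈ interior ((2 : ℝ) • Δ)) ∧
      (![(2 : ℝ), 1, -1, 0, 0] ∈ interior ((3 : ℝ) • Δ)) := by
  have hb_cast : b = fun k i => (vertexB k i : ℝ) := by
    subst hb; funext k i; fin_cases k <;> fin_cases i <;> simp [vertexB]
  subst hΔ hb_cast
  exact ⟨not_exists_intCast_mem_interior_two_smul_convexHull_vertexB,
    mem_interior_three_smul_convexHull_vertexB⟩
end

section
/- For every nonnegative integer l and every prime p ≠ 3, the rational number (1/9)_{5l}·(2/3)_{3l}·(4/9)_{2l} / ((1)_{9l}·(2/9)_l) is p-integral, where (a)_k = a(a+1)⋯(a+k−1) denotes the Pochhammer symbol (with (a)₀ = 1). -/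
/-!
For `p ≠ 3` and `u ∈ {1, 3, 9}`, the `p`-adic valuation of `(m / u)_n` is, by Legendre's
argument, `∑_{i ≥ 1} #{j < n | p ^ i ∣ m + u j}`. For a modulus `d = p ^ i` prime to `3`, pick
`w` with `w d ≡ -1 (mod 9)`; the count attached to `(m / u)_{k l}` is then
`⌊(⌊90 l / d⌋ + g ρ) / (g u)⌋` with `g u k = 90` and `ρ = m w mod u`. So the valuation
inequality reduces, level by level, to an inequality between floors of the single integer
`⌊90 l / d⌋`, which only depends on the class of `w` modulo `9` and is checked class by class.
-/

open Finset

theorem Nat.card_multiples_add (n c d : ℕ) :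
    #{j ∈ range n | d ∣ j + c + 1} + c / d = (n + c) / d := by
  induction n with
  | zero => simp
  | succ n ih =>
    rw [range_add_one, filter_insert, show n + 1 + c = n + c + 1 by ring, Nat.succ_div, ← ih]
    split_ifs
    · rw [card_insert_of_notMem (by simp)]
      ring
    · rfl

theorem Nat.add_div_eq_mul_add_mul_div_mul {u m c ρ d : ℕ} (hm : 0 < m) (hmu : m ≤ u)
    (h : u * (c + 1) = ρ * d + m) (n : ℕ) :
    (n + c) / d = (u * n + ρ * d) / (u * d) := by
  have : u * n + ρ * d = u * (n + c) + (u - m) := by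
    zify [hmu] at h ⊢
    linear_combination (-1 : ℤ) * h
  rw [this, ← Nat.div_div_eq_div_mul, Nat.mul_add_div (by omega),
    Nat.div_eq_of_lt (show u - m < u by omega), add_zero]

theorem Nat.mul_add_mul_div_mul_eq {u n ρ d g N : ℕ} (hd : 0 < d) (hg : 0 < g)
    (hN : g * u * n = N) :
    (u * n + ρ * d) / (u * d) = (N / d + g * ρ) / (g * u) := by
  rw [← Nat.mul_div_mul_left _ _ hg,
    show g * (u * n + ρ * d) = N + g * ρ * d by rw [← hN]; ring,
    show g * (u * d) = d * (g * u) by ring, ← Nat.div_div_eq_div_mul,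
    Nat.add_mul_div_right _ _ hd]

theorem card_filter_dvd_add_mul {u m w d : ℕ} (hd : 0 < d) (hm : 0 < m) (hmu : m ≤ u)
    (hw : u ∣ w * d + 1) (n : ℕ) :
    #{j ∈ range n | d ∣ m + u * j} = (u * n + m * w % u * d) / (u * d) := by
  set ρ := m * w % u
  have hρ : ρ < u := Nat.mod_lt _ (by omega)
  obtain ⟨c', hc'⟩ : u ∣ ρ * d + m := by
    have h : ρ * d + m ≡ m * (w * d + 1) [MOD u] := by
      rw [show m * (w * d + 1) = m * w * d + m by ring]
      exact ((Nat.mod_modEq _ _).mul_right d).add_right m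
    exact (h.dvd_iff dvd_rfl).mpr (hw.mul_left m)
  obtain ⟨c, rfl⟩ := Nat.exists_eq_succ_of_ne_zero (show c' ≠ 0 by rintro rfl; omega)
  have hcop : Nat.Coprime d u := Nat.Coprime.coprime_dvd_right hw (by simp)
  have hiff : ∀ j, d ∣ m + u * j ↔ d ∣ j + c + 1 := fun j => by
    rw [← hcop.dvd_mul_left (n := j + c + 1),
      show u * (j + c + 1) = m + u * j + ρ * d by linarith, Nat.dvd_add_left (dvd_mul_left d ρ)]
  have hc : c / d = 0 := by
    rw [← zero_add c, Nat.add_div_eq_mul_add_mul_div_mul hm hmu hc'.symm, mul_zero, zero_add,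
      Nat.mul_div_mul_right _ _ hd, Nat.div_eq_of_lt hρ]
  rw [filter_congr fun j _ => hiff j, ← add_zero #_, ← hc, Nat.card_multiples_add,
    Nat.add_div_eq_mul_add_mul_div_mul hm hmu hc'.symm]

theorem exists_lt_nine_dvd_mul_add_one {d : ℕ} (hd : ¬ 3 ∣ d) : ∃ w < 9, 9 ∣ w * d + 1 := by
  have : d % 9 = 1 ∨ d % 9 = 2 ∨ d % 9 = 4 ∨ d % 9 = 5 ∨ d % 9 = 7 ∨ d % 9 = 8 := by omega
  rcases this with h | h | h | h | h | h
  exacts [⟨8, by omega⟩, ⟨4, by omega⟩, ⟨2, by omega⟩, ⟨7, by omega⟩, ⟨5, by omega⟩,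
    ⟨1, by omega⟩]

/- The Landau–Christol condition for the parameters `1/9, 2/3, 4/9` against `1, 2/9`, written
with `Z = 90 l / d` and `r ≡ -d⁻¹ (mod 9)`. -/
theorem landau_inequality (Z r : ℕ) (hr : r < 9) (hr3 : r % 3 ≠ 0) :
    Z / 10 + (Z + 10 * (2 * r % 9)) / 90 ≤
      (Z + 2 * r) / 18 + (Z + 10 * (2 * r % 3)) / 30 + (Z + 5 * (4 * r % 9)) / 45 := by
  interval_cases r <;> omega

theorem card_filter_dvd_le_of_not_three_dvd {d : ℕ} (hd : ¬ 3 ∣ d) (l : ℕ) :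
    #{j ∈ range (9 * l) | d ∣ 1 + 1 * j} + #{j ∈ range l | d ∣ 2 + 9 * j} ≤
      #{j ∈ range (5 * l) | d ∣ 1 + 9 * j} + #{j ∈ range (3 * l) | d ∣ 2 + 3 * j} +
        #{j ∈ range (2 * l) | d ∣ 4 + 9 * j} := by
  have hd0 : 0 < d := Nat.pos_of_ne_zero fun h => hd (h ▸ dvd_zero 3)
  obtain ⟨w, hw9, hw⟩ := exists_lt_nine_dvd_mul_add_one hd
  have hw3 : 3 ∣ w * d + 1 := dvd_trans (by norm_num) hw
  have hw_mod : w % 3 ≠ 0 := fun h => by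
    have := dvd_mul_of_dvd_left (Nat.dvd_of_mod_eq_zero h) d
    omega
  rw [card_filter_dvd_add_mul (w := w) hd0 one_pos le_rfl (one_dvd _),
    card_filter_dvd_add_mul hd0 (by norm_num) (by norm_num) hw,
    card_filter_dvd_add_mul hd0 one_pos (by norm_num) hw,
    card_filter_dvd_add_mul hd0 (by norm_num) (by norm_num) hw3,
    card_filter_dvd_add_mul hd0 (by norm_num) (by norm_num) hw,
    Nat.mul_add_mul_div_mul_eq hd0 (g := 10) (N := 90 * l) (by norm_num) (by ring),
    Nat.mul_add_mul_div_mul_eq hd0 (g := 10) (N := 90 * l) (by norm_num) (by ring),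
    Nat.mul_add_mul_div_mul_eq hd0 (g := 2) (N := 90 * l) (by norm_num) (by ring),
    Nat.mul_add_mul_div_mul_eq hd0 (g := 10) (N := 90 * l) (by norm_num) (by ring),
    Nat.mul_add_mul_div_mul_eq hd0 (g := 5) (N := 90 * l) (by norm_num) (by ring)]
  have := landau_inequality (90 * l / d) w hw9 hw_mod
  omega

theorem sum_padicValNat_eq_sum_card_filter_pow_dvd {ι : Type*} {p N : ℕ} (hp : p.Prime)
    {s : Finset ι} {f : ι → ℕ} (hf : ∀ j ∈ s, f j ≠ 0 ∧ f j ≤ N) :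
    ∑ j ∈ s, padicValNat p (f j) = ∑ i ∈ Ico 1 N, #{j ∈ s | p ^ i ∣ f j} := by
  simp_rw [card_filter]
  rw [sum_comm]
  refine sum_congr rfl fun j hj => ?_
  rw [← Nat.factorization_def _ hp, Nat.factorization_eq_card_pow_dvd_of_lt hp
    (Nat.pos_of_ne_zero (hf j hj).1) ((hf j hj).2.trans_lt (Nat.lt_pow_self hp.one_lt)),
    card_filter]

theorem padicValRat_prod {ι : Type*} {p : ℕ} [Fact p.Prime] {s : Finset ι} {f : ι → ℚ}
    (hf : ∀ j ∈ s, f j ≠ 0) :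
    padicValRat p (∏ j ∈ s, f j) = ∑ j ∈ s, padicValRat p (f j) := by
  classical
  induction s using Finset.induction_on with
  | empty => simp
  | insert a s ha ih =>
    rw [prod_insert ha, sum_insert ha, padicValRat.mul (hf a (mem_insert_self a s))
      (prod_ne_zero_iff.mpr fun j hj => hf j (mem_insert_of_mem hj)),
      ih fun j hj => hf j (mem_insert_of_mem hj)]

theorem ascPochhammer_eval_eq_prod_range {R : Type*} [CommSemiring R] (n : ℕ) (x : R) :
    (ascPochhammer R n).eval x = ∏ j ∈ range n, (x + j) := by
  induction n with
  | zero => simp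
  | succ n ih => rw [ascPochhammer_succ_eval, ih, prod_range_succ]

theorem padicValRat_ascPochhammer_eval {p u m n N : ℕ} [hp : Fact p.Prime] {x : ℚ}
    (hx : u * x = m) (hu : ¬ p ∣ u) (hm : 0 < m) (hN : m + u * n ≤ N) :
    padicValRat p ((ascPochhammer ℚ n).eval x) =
      ((∑ i ∈ Ico 1 N, #{j ∈ range n | p ^ i ∣ m + u * j} : ℕ) : ℤ) := by
  have hu0 : (u : ℚ) ≠ 0 := Nat.cast_ne_zero.mpr fun h => hu (h ▸ dvd_zero p)
  have hfactor : ∀ j : ℕ, x + j = ((m + u * j : ℕ) : ℚ) / u := fun j => by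
    field_simp
    push_cast
    linarith
  have hfactor_ne : ∀ j : ℕ, x + j ≠ 0 := fun j => by
    rw [hfactor]
    positivity
  rw [ascPochhammer_eval_eq_prod_range, padicValRat_prod fun j _ => hfactor_ne j,
    ← sum_padicValNat_eq_sum_card_filter_pow_dvd hp.out fun j hj => ⟨by omega, by
      simp only [mem_range] at hj; nlinarith⟩, Nat.cast_sum]
  refine sum_congr rfl fun j _ => ?_
  rw [hfactor, padicValRat.div (by positivity) hu0, padicValRat.of_nat, padicValRat.of_nat,
    padicValNat.eq_zero_of_not_dvd hu, Nat.cast_zero, sub_zero]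

theorem not_dvd_den_of_padicValRat_nonneg {p : ℕ} [Fact p.Prime] {q : ℚ}
    (h : 0 ≤ padicValRat p q) : ¬ p ∣ q.den := by
  rw [← Rat.padicValuation_le_one_iff]
  by_cases hq : q = 0
  · simp [hq]
  · simp only [Rat.padicValuation, Valuation.coe_mk, MonoidWithZeroHom.coe_mk, ZeroHom.coe_mk,
      if_neg hq, ← WithZero.exp_zero, WithZero.exp_le_exp]
    linarith

/-- for every l ≥ 0 and every prime p ≠ 3, the rational number
(1/9)_{5l}(2/3)_{3l}(4/9)_{2l} / ((1)_{9l}(2/9)_l) is p-integral. -/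
theorem stmt_17 :
    ∀ l : ℕ, ∀ p : ℕ, p.Prime → p ≠ 3 →
      ¬ (p ∣ (((ascPochhammer ℚ (5 * l)).eval (1 / 9) *
          (ascPochhammer ℚ (3 * l)).eval (2 / 3) *
          (ascPochhammer ℚ (2 * l)).eval (4 / 9)) /
        ((ascPochhammer ℚ (9 * l)).eval 1 *
          (ascPochhammer ℚ l).eval (2 / 9))).den) := by
  intro l p hp hp3
  have := Fact.mk hp
  have h3 : ¬ p ∣ 3 := fun h => hp3 ((Nat.prime_dvd_prime_iff_eq hp Nat.prime_three).mp h)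
  have h9 : ¬ p ∣ 9 := fun h => h3 (hp.dvd_of_dvd_pow (show p ∣ 3 ^ 2 from h))
  have hpow : ∀ i, ¬ 3 ∣ p ^ i := fun i h => hp3
    ((Nat.prime_dvd_prime_iff_eq Nat.prime_three hp).mp (Nat.prime_three.dvd_of_dvd_pow h)).symm
  set N := 45 * l + 4 with hN
  have hcount := sum_le_sum fun i (_ : i ∈ Ico 1 N) =>
    card_filter_dvd_le_of_not_three_dvd (hpow i) l
  simp only [sum_add_distrib] at hcount
  have h₁ := ascPochhammer_pos (5 * l) (1 / 9 : ℚ) (by norm_num)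
  have h₂ := ascPochhammer_pos (3 * l) (2 / 3 : ℚ) (by norm_num)
  have h₃ := ascPochhammer_pos (2 * l) (4 / 9 : ℚ) (by norm_num)
  have h₄ := ascPochhammer_pos (9 * l) (1 : ℚ) one_pos
  have h₅ := ascPochhammer_pos l (2 / 9 : ℚ) (by norm_num)
  apply not_dvd_den_of_padicValRat_nonneg
  rw [padicValRat.div (by positivity) (by positivity),
    padicValRat.mul (by positivity) h₃.ne', padicValRat.mul h₁.ne' h₂.ne',
    padicValRat.mul h₄.ne' h₅.ne',
    padicValRat_ascPochhammer_eval (N := N) (u := 9) (m := 1) (by norm_num) h9 one_pos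
      (by omega),
    padicValRat_ascPochhammer_eval (N := N) (u := 3) (m := 2) (by norm_num) h3 two_pos
      (by omega),
    padicValRat_ascPochhammer_eval (N := N) (u := 9) (m := 4) (by norm_num) h9 (by norm_num)
      (by omega),
    padicValRat_ascPochhammer_eval (N := N) (u := 1) (m := 1) (by norm_num) hp.not_dvd_one
      one_pos (by omega),
    padicValRat_ascPochhammer_eval (N := N) (u := 9) (m := 2) (by norm_num) h9 two_pos
      (by omega)]
  omega
end
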